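/- arXiv:1508.02864 — 3 statements merged into one kernel-verified Lean document; each statement's English description precedes it below -/
import Mathlib

section
/- For every natural number n, the n-th Church numeral applied to K is βη-equal to the n-ary constant combinator: (c_n K) =βη K_n, where K_n = λp x_1…x_n.p. -/
namespace LC

/-- Untyped λ-terms, de Bruijn indices. -/
inductive Tm : Type
  | var : ℕ → Tm
  | app : Tm → Tm → Tm
  | lam : Tm → Tm
  deriving DecidableEq

namespace Tm

/-- Shift the free variables ≥ c up by one. -/
def lift (c : ℕ) : Tm → Tm
  | var n => if n < c then var n else var (n + 1)
  | app a b => app (lift c a) (lift c b)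
  | lam a => lam (lift (c + 1) a)

/-- Substitute `s` for the free variable `k`. -/
def subst (k : ℕ) (s : Tm) : Tm → Tm
  | var n => if n = k then s else if k < n then var (n - 1) else var n
  | app a b => app (subst k s a) (subst k s b)
  | lam a => lam (subst (k + 1) (lift 0 s) a)

/-- One-step βη-reduction (with congruence closure). -/
inductive Step : Tm → Tm → Prop
  | beta (a b : Tm) : Step (app (lam a) b) (subst 0 b a)
  | eta (a : Tm) : Step (lam (app (lift 0 a) (var 0))) a
  | appL {a a' : Tm} (b : Tm) : Step a a' → Step (app a b) (app a' b)
  | appR (a : Tm) {b b' : Tm} : Step b b' → Step (app a b) (app a b')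
  | lamCongr {a a' : Tm} : Step a a' → Step (lam a) (lam a')

/-- βη-equivalence: the equivalence relation generated by βη-reduction. -/
def BetaEta : Tm → Tm → Prop := Relation.EqvGen Step

/-- Multi-step βη-reduction: reflexive-transitive closure of βη-reduction. -/
def Reduces : Tm → Tm → Prop := Relation.ReflTransGen Step

/-- I = λx.x -/
def I : Tm := lam (var 0)
/-- K = λxy.x -/
def K : Tm := lam (lam (var 1))
/-- B = λxyz.(x (y z)) -/
def B : Tm := lam (lam (lam (app (var 2) (app (var 1) (var 0)))))
/-- C = λxyz.(x z y) -/
def C : Tm := lam (lam (lam (app (app (var 2) (var 0)) (var 1))))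
/-- S = λxyz.(x z (y z)) -/
def S : Tm := lam (lam (lam (app (app (var 2) (var 0)) (app (var 1) (var 0)))))

/-- body of the n-th Church numeral: s (s ⋯ (s z)⋯), n times. -/
def churchBody : ℕ → Tm
  | 0 => var 0
  | n + 1 => app (var 1) (churchBody n)

/-- The n-th Church numeral c_n = λsz.(s (s ⋯ (s z)⋯)). -/
def church (n : ℕ) : Tm := lam (lam (churchBody n))

/-- n nested λ-abstractions. -/
def lamN : ℕ → Tm → Tm
  | 0, t => t
  | n + 1, t => lam (lamN n t)

/-- Shift all free variables up by n. -/
def liftN (n : ℕ) (t : Tm) : Tm := (lift 0)^[n] t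

/-- t (var (a+k-1)) ⋯ (var (a+1)) (var a) : left-associated application of t
to k variables with descending indices. -/
def appVars (t : Tm) (a k : ℕ) : Tm :=
  ((List.range k).reverse).foldl (fun s i => app s (var (a + i))) t

/-- t (var a) (var (a+1)) ⋯ (var (a+k-1)) : left-associated application of t
to k variables with ascending indices. -/
def appVarsAsc (t : Tm) (a k : ℕ) : Tm :=
  (List.range k).foldl (fun s i => app s (var (a + i))) t

/-- Left-associated application of t to a list of terms. -/
def appList (t : Tm) (l : List Tm) : Tm := l.foldl app t

/-- K_n = λp x_1…x_n. p -/
def Kn (n : ℕ) : Tm := lamN (n + 1) (var n)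
/-- S_n = λpq x_1…x_n.(p x_1⋯x_n (q x_1⋯x_n)) -/
def Sn (n : ℕ) : Tm :=
  lamN (n + 2) (app (appVars (var (n + 1)) 0 n) (appVars (var n) 0 n))
/-- B_n = λpq x_1…x_n.(p (q x_1⋯x_n)) -/
def Bn (n : ℕ) : Tm := lamN (n + 2) (app (var (n + 1)) (appVars (var n) 0 n))
/-- C_n = λpq x_1…x_n.(p x_1⋯x_n q) -/
def Cn (n : ℕ) : Tm := lamN (n + 2) (app (appVars (var (n + 1)) 0 n) (var n))



/-- K applied n times to var 0. -/
def ks : ℕ → Tm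
  | 0 => var 0
  | n + 1 => app K (ks n)

lemma reduces_appR' (a : Tm) {b b' : Tm} (h : Reduces b b') :
    Reduces (app a b) (app a b') := by
  induction h with
  | refl => exact Relation.ReflTransGen.refl
  | tail _ s ih => exact ih.tail (Step.appR a s)

lemma reduces_lam' {a a' : Tm} (h : Reduces a a') : Reduces (lam a) (lam a') := by
  induction h with
  | refl => exact Relation.ReflTransGen.refl
  | tail _ s ih => exact ih.tail (Step.lamCongr s)

lemma betaEta_of_reduces {a b : Tm} (h : Reduces a b) : BetaEta a b := by
  induction h with
  | refl => exact Relation.EqvGen.refl _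
  | tail _ s ih => exact ih.trans _ _ _ (Relation.EqvGen.rel _ _ s)

lemma lift_K (c : ℕ) : lift c K = K := by
  simp [K, lift]

lemma subst_one_K_churchBody (n : ℕ) : subst 1 K (churchBody n) = ks n := by
  induction n with
  | zero => simp [churchBody, ks, subst]
  | succ n ih => simp [churchBody, ks, subst, ih]

lemma lift_lamN (n c : ℕ) : lift c (lamN n (var (n + c))) = lamN n (var (n + c + 1)) := by
  induction n generalizing c with
  | zero => simp [lamN, lift]
  | succ n ih =>
    have := ih (c + 1)
    simp only [lamN, lift]
    rw [show n + 1 + c = n + (c + 1) by omega, this, show n + (c + 1) + 1 = n + 1 + c + 1 by omega]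

lemma ks_reduces (n : ℕ) : Reduces (ks n) (lamN n (var n)) := by
  induction n with
  | zero => exact Relation.ReflTransGen.refl
  | succ n ih =>
    have h1 : Reduces (ks (n + 1)) (app K (lamN n (var n))) := reduces_appR' _ ih
    have h2 : Step (app K (lamN n (var n))) (lamN (n + 1) (var (n + 1))) := by
      have hb := Step.beta (lam (var 1)) (lamN n (var n))
      have hl : lift 0 (lamN n (var n)) = lamN n (var (n + 1)) := by simpa using lift_lamN n 0
      simpa [K, subst, lamN, hl] using hb
    exact h1.tail h2

/-- (c_n K) =βη K_n, where K_n = λp x_1…x_n.p. -/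
theorem church_app_K_eq_Kn (n : ℕ) : BetaEta (app (church n) K) (Kn n) := by
  apply betaEta_of_reduces
  have h1 : Step (app (church n) K) (lam (ks n)) := by
    have hb := Step.beta (lam (churchBody n)) K
    simpa [church, subst, lift_K, subst_one_K_churchBody] using hb
  have h2 : Reduces (lam (ks n)) (Kn n) := by
    have := reduces_lam' (ks_reduces n)
    simpa [Kn, lamN] using this
  exact (Relation.ReflTransGen.single h1).trans h2

end Tm
end LC
end

section
/- For every natural number n, the n-ary generalized C combinator satisfies C_n =βη (C (B B S_n) K_n). -/
namespace LC

namespace Tm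

/-! The combinator `C (B B Sₙ) Kₙ` is closed, hence η-equal to `λ x y. C (B B Sₙ) Kₙ x y`, and the
combinator laws reduce the application to fresh variables `x y` step by step:
`C (B B Sₙ) Kₙ x y ↠ B B Sₙ x Kₙ y ↠ B (Sₙ x) Kₙ y ↠ Sₙ x (Kₙ y) ↠ λ x⃗. x x⃗ (Kₙ y x⃗) ↠ λ x⃗. x x⃗ y`,
which is the body of `Cₙ`. -/

local infix:50 " ↠ " => Reduces

instance : Trans Reduces Reduces Reduces := ⟨Relation.ReflTransGen.trans⟩

theorem Reduces.toBetaEta {a b : Tm} (h : a ↠ b) : BetaEta a b :=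
  Relation.EqvGen.reflTransGen_le_eqvGen _ _ _ h

theorem Reduces.app_left {a a' : Tm} (b : Tm) (h : a ↠ a') : app a b ↠ app a' b :=
  h.lift (app · b) fun _ _ => Step.appL b

theorem Reduces.app_right (a : Tm) {b b' : Tm} (h : b ↠ b') : app a b ↠ app a b' :=
  h.lift (app a) fun _ _ => Step.appR a

theorem Reduces.lam_congr {a a' : Tm} (h : a ↠ a') : lam a ↠ lam a' :=
  h.lift lam fun _ _ => Step.lamCongr

theorem Reduces.lamN_congr (m : ℕ) {a a' : Tm} (h : a ↠ a') : lamN m a ↠ lamN m a' := by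
  induction m with
  | zero => exact h
  | succ m ih => exact ih.lam_congr

theorem appVars_succ (t : Tm) (a k : ℕ) :
    appVars t a (k + 1) = appVars (app t (var (a + k))) a k := by
  simp [appVars, List.range_succ]

theorem Reduces.appVars_congr (a k : ℕ) {t t' : Tm} (h : t ↠ t') :
    appVars t a k ↠ appVars t' a k := by
  induction k generalizing t t' with
  | zero => exact h
  | succ k ih => simpa only [appVars_succ] using ih (h.app_left _)

theorem reduces_beta {a b c : Tm} (h : subst 0 b a = c) : app (lam a) b ↠ c :=
  h ▸ .single (.beta a b)

theorem reduces_eta {a b : Tm} (h : lift 0 a = b) : lam (app b (var 0)) ↠ a :=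
  h ▸ .single (.eta a)

theorem subst_lift : ∀ (t : Tm) (k : ℕ) (s : Tm), subst k s (lift k t) = t
  | var n, k, s => by
      by_cases h : n < k
      · simp [lift, subst, h, Nat.ne_of_lt h, Nat.not_lt_of_lt h]
      · simp [lift, subst, h, show n + 1 ≠ k by omega, show k < n + 1 by omega]
  | app a b, k, s => by simp only [lift, subst, subst_lift a, subst_lift b]
  | lam a, k, s => by simp only [lift, subst, subst_lift a]

theorem lift_lift_of_le : ∀ (t : Tm) {c c' : ℕ}, c ≤ c' →
    lift c (lift c' t) = lift (c' + 1) (lift c t)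
  | var n, c, c', h => by
      by_cases h1 : n < c'
      · by_cases h2 : n < c
        · simp [lift, h1, h2, show n < c' + 1 by omega]
        · simp [lift, h1, h2]
      · simp [lift, h1, show ¬ n < c by omega, show ¬ n + 1 < c by omega]
  | app a b, c, c', h => by simp only [lift, lift_lift_of_le a h, lift_lift_of_le b h]
  | lam a, c, c', h => by simp only [lift, lift_lift_of_le a (Nat.succ_le_succ h)]

theorem liftN_succ (m : ℕ) (t : Tm) : liftN (m + 1) t = lift 0 (liftN m t) :=
  Function.iterate_succ_apply' _ _ _

theorem liftN_var (m j : ℕ) : liftN m (var j) = var (j + m) := by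
  induction m with
  | zero => rfl
  | succ m ih => simp [liftN_succ, ih, lift, Nat.add_assoc]

theorem liftN_app (m : ℕ) (a b : Tm) : liftN m (app a b) = app (liftN m a) (liftN m b) := by
  induction m with
  | zero => rfl
  | succ m ih => simp only [liftN_succ, ih, lift]

theorem lift_liftN (k : ℕ) (t : Tm) : lift k (liftN k t) = liftN (k + 1) t := by
  induction k with
  | zero => rfl
  | succ k ih => rw [liftN_succ, ← lift_lift_of_le _ k.zero_le, ih, liftN_succ (k + 1)]

theorem subst_liftN_succ (k : ℕ) (s t : Tm) : subst k s (liftN (k + 1) t) = liftN k t := by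
  rw [← lift_liftN, subst_lift]

theorem subst_var_self (k : ℕ) (s : Tm) : subst k s (var k) = s := by simp [subst]

theorem subst_var_of_lt {n k : ℕ} (h : n < k) (s : Tm) : subst k s (var n) = var n := by
  simp [subst, h.ne, Nat.not_lt_of_lt h]

theorem subst_lamN (k : ℕ) (s : Tm) (m : ℕ) (t : Tm) :
    subst k s (lamN m t) = lamN m (subst (k + m) (liftN m s) t) := by
  induction m generalizing k s with
  | zero => rfl
  | succ m ih =>
    have hs : liftN m (lift 0 s) = liftN (m + 1) s := (Function.iterate_succ_apply _ _ _).symm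
    simp only [lamN, subst, ih, hs, Nat.add_right_comm k 1 m]
    rfl

theorem subst_appVars {a k j : ℕ} (h : a + k ≤ j) (s t : Tm) :
    subst j s (appVars t a k) = appVars (subst j s t) a k := by
  induction k generalizing t with
  | zero => rfl
  | succ k ih =>
    rw [appVars_succ, appVars_succ, ih (by omega)]
    simp only [subst.eq_2, subst_var_of_lt (show a + k < j by omega)]

def WellScoped : ℕ → Tm → Prop
  | c, var n => n < c
  | c, app a b => WellScoped c a ∧ WellScoped c b
  | c, lam a => WellScoped (c + 1) a

theorem WellScoped.lift_eq {t : Tm} {c d : ℕ} (h : WellScoped c t) (hcd : c ≤ d) :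
    lift d t = t := by
  induction t generalizing c d with
  | var n => simp only [WellScoped] at h; simp [lift, show n < d by omega]
  | app a b iha ihb => simp only [lift, iha h.1 hcd, ihb h.2 hcd]
  | lam a ih => simp only [lift, ih h (Nat.succ_le_succ hcd)]

theorem WellScoped.liftN_eq {t : Tm} (h : WellScoped 0 t) (m : ℕ) : liftN m t = t := by
  induction m with
  | zero => rfl
  | succ m ih => rw [liftN_succ, ih, h.lift_eq le_rfl]

theorem wellScoped_lamN {c m : ℕ} {t : Tm} (h : WellScoped (c + m) t) :
    WellScoped c (lamN m t) := by
  induction m generalizing c with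
  | zero => exact h
  | succ m ih => exact ih (by rwa [Nat.add_right_comm])

theorem wellScoped_appVars {c a k : ℕ} {t : Tm} (ht : WellScoped c t) (h : a + k ≤ c) :
    WellScoped c (appVars t a k) := by
  induction k generalizing t with
  | zero => exact ht
  | succ k ih =>
    rw [appVars_succ]
    exact ih ⟨ht, show a + k < c by omega⟩ (by omega)

theorem wellScoped_B : WellScoped 0 B := by simp [B, WellScoped]

theorem wellScoped_C : WellScoped 0 C := by simp [C, WellScoped]

theorem wellScoped_Kn (n : ℕ) : WellScoped 0 (Kn n) :=
  wellScoped_lamN (by simp [WellScoped])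

theorem wellScoped_Sn (n : ℕ) : WellScoped 0 (Sn n) :=
  wellScoped_lamN ⟨wellScoped_appVars (by simp [WellScoped]) (by omega),
    wellScoped_appVars (by simp [WellScoped]) (by omega)⟩

theorem reduces_eta_eta {t : Tm} (h : WellScoped 0 t) :
    lam (lam (app (app t (var 1)) (var 0))) ↠ t := by
  have hlift : lift 0 (app t (var 0)) = app t (var 1) := by simp [lift, h.lift_eq le_rfl]
  calc _ ↠ lam (app t (var 0)) := (reduces_eta hlift).lam_congr
    _ ↠ t := reduces_eta (h.lift_eq le_rfl)

theorem reduces_B (a b c : Tm) : app (app (app B a) b) c ↠ app a (app b c) :=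
  calc _ ↠ app (app (lam (lam (app (liftN 2 a) (app (var 1) (var 0))))) b) c :=
        ((reduces_beta (by simp [subst, liftN])).app_left _).app_left _
    _ ↠ app (lam (app (liftN 1 a) (app (lift 0 b) (var 0)))) c :=
        (reduces_beta (by simp [subst, subst_liftN_succ])).app_left _
    _ ↠ _ := reduces_beta (by simp [liftN, subst, subst_lift])

theorem reduces_C (a b c : Tm) : app (app (app C a) b) c ↠ app (app a c) b :=
  calc _ ↠ app (app (lam (lam (app (app (liftN 2 a) (var 0)) (var 1)))) b) c :=
        ((reduces_beta (by simp [subst, liftN])).app_left _).app_left _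
    _ ↠ app (lam (app (app (liftN 1 a) (var 0)) (lift 0 b))) c :=
        (reduces_beta (by simp [subst, subst_liftN_succ])).app_left _
    _ ↠ _ := reduces_beta (by simp [liftN, subst, subst_lift])

theorem reduces_Kn_app (n : ℕ) (a : Tm) : app (Kn n) a ↠ lamN n (liftN n a) :=
  reduces_beta (by simp [subst_lamN, subst_var_self])

theorem reduces_appVars_lamN_liftN (t : Tm) (a k : ℕ) : appVars (lamN k (liftN k t)) a k ↠ t := by
  induction k with
  | zero => exact .refl
  | succ k ih =>
    rw [appVars_succ]
    refine .trans (Reduces.appVars_congr a k (reduces_beta ?_)) ih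
    rw [subst_lamN, Nat.zero_add, subst_liftN_succ]

theorem reduces_appVars_Kn_app (n : ℕ) (b : Tm) (a : ℕ) : appVars (app (Kn n) b) a n ↠ b :=
  ((reduces_Kn_app n b).appVars_congr a n).trans (reduces_appVars_lamN_liftN b a n)

theorem reduces_Sn (n : ℕ) (a b : Tm) :
    app (app (Sn n) a) b ↠ lamN n (app (appVars (liftN n a) 0 n) (appVars (liftN n b) 0 n)) :=
  calc _ ↠ app (lamN (n + 1) (app (appVars (liftN (n + 1) a) 0 n) (appVars (var n) 0 n))) b :=
        (reduces_beta (by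
          simp [subst_lamN, subst.eq_2, subst_appVars, subst_var_self, subst_var_of_lt])).app_left _
    _ ↠ _ := reduces_beta (by
          simp [subst_lamN, subst.eq_2, subst_appVars, subst_var_self, subst_liftN_succ])

/-- C_n =βη (C (B B S_n) K_n). -/
theorem Cn_encoding (n : ℕ) :
    BetaEta (Cn n) (app (app C (app (app B B) (Sn n))) (Kn n)) := by
  set T := app (app C (app (app B B) (Sn n))) (Kn n)
  have hT : WellScoped 0 T :=
    ⟨⟨wellScoped_C, ⟨wellScoped_B, wellScoped_B⟩, wellScoped_Sn n⟩, wellScoped_Kn n⟩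
  have hbody : app (app T (var 1)) (var 0) ↠ lamN n (app (appVars (var (n + 1)) 0 n) (var n)) :=
    calc _ ↠ app (app (app (app (app B B) (Sn n)) (var 1)) (Kn n)) (var 0) :=
          (reduces_C _ _ _).app_left _
      _ ↠ app (app (app B (app (Sn n) (var 1))) (Kn n)) (var 0) :=
          ((reduces_B _ _ _).app_left _).app_left _
      _ ↠ app (app (Sn n) (var 1)) (app (Kn n) (var 0)) := reduces_B _ _ _
      _ ↠ lamN n (app (appVars (var (n + 1)) 0 n) (appVars (app (Kn n) (var n)) 0 n)) := by
          simpa [liftN_var, liftN_app, (wellScoped_Kn n).liftN_eq, Nat.add_comm]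
            using reduces_Sn n (var 1) (app (Kn n) (var 0))
      _ ↠ _ := ((reduces_appVars_Kn_app n (var n) 0).app_right _).lamN_congr n
  have hCn : lam (lam (app (app T (var 1)) (var 0))) ↠ Cn n := hbody.lam_congr.lam_congr
  exact .trans _ _ _ (.symm _ _ hCn.toBetaEta) (reduces_eta_eta hT).toBetaEta

end Tm
end LC
end

section
/- n-ary generalization of Böhm's relation between Curry's and Turing's fixed-point combinators: for every n ≥ 1 and every 1 ≤ k ≤ n, the term (Φ_k^n M_1^n ⋯ M_n^n) βη-reduces (in the reflexive-transitive closure of βη-reduction) to Ψ_k^n. -/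
namespace LC

namespace Tm

/-- W_i = λx_1…x_n.(f_i (x_1 x_1 ⋯ x_n) ⋯ (x_n x_1 ⋯ x_n)); here f_i is the
variable of index 2n - i, bound by the surrounding λf_1…f_n. -/
def W (n j : ℕ) : Tm :=
  lamN n (((List.range n).reverse).foldl
    (fun s i => app s (appVars (var i) 0 n)) (var (2 * n - j)))

/-- Curry's n-ary multiple fixed-point combinator Φ_j^n = λf_1…f_n.(W_j W_1 ⋯ W_n). -/
def Phi (n k : ℕ) : Tm :=
  lamN n (appList (W n k) ((List.range n).map fun i => W n (i + 1)))

/-- V_i = λx_1…x_n f_1…f_n.(f_i (x_1 x_1 ⋯ x_n f_1 ⋯ f_n) ⋯ (x_n x_1 ⋯ x_n f_1 ⋯ f_n)). -/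
def V (n j : ℕ) : Tm :=
  lamN (2 * n) (((List.range n).reverse).foldl
    (fun s i => app s (appVars (appVars (var (n + i)) n n) 0 n)) (var (n - j)))

/-- Turing's n-ary multiple fixed-point combinator Ψ_j^n = (V_j V_1 ⋯ V_n). -/
def Psi (n k : ℕ) : Tm :=
  appList (V n k) ((List.range n).map fun i => V n (i + 1))

/-- M_j^n = λφ_1…φ_n x_1…x_n.(x_j (φ_1 x_1 ⋯ x_n) ⋯ (φ_n x_1 ⋯ x_n)).
Under the 2n binders, φ_i = var (2n - i) and x_j = var (n - j). -/
def M (n j : ℕ) : Tm :=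
  lamN (2 * n) (((List.range n).reverse).foldl
    (fun s i => app s (appVars (var (n + i)) 0 n)) (var (n - j)))

/-!
Substituting `M_1, …, M_n` for `f_1, …, f_n` turns `W_i` into `λx⃗. M_i (x_1 x⃗) ⋯ (x_n x⃗)`,
and contracting the `n` outer redexes of `M_i` gives `λx⃗ y⃗. y_i (x_1 x⃗ y⃗) ⋯ (x_n x⃗ y⃗)`,
which is `V_i`. Hence `Φ_k M⃗ ↠ W_k[M⃗] W_1[M⃗] ⋯ W_n[M⃗] ↠ V_k V_1 ⋯ V_n = Ψ_k`, by β-steps only.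

In de Bruijn notation, contracting a block of redexes `(λ^m t) b_1 ⋯ b_m` performs `m` single
substitutions in a row, each under fewer binders than the last; they compose into one parallel
substitution `inst (listSub [b_1, …, b_m])`, whose effect on `t` can be read off directly.
-/

theorem lift_lift_comm (t : Tm) {d c : ℕ} (h : d ≤ c) :
    lift (c + 1) (lift d t) = lift d (lift c t) := by
  induction t generalizing d c with
  | var v => by_cases hd : v < d <;> by_cases hc : v < c <;> simp [lift, *] <;> omega
  | app a b iha ihb => simp only [lift, iha h, ihb h]
  | lam a ih => simp only [lift, ih (Nat.succ_le_succ h)]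

def up (σ : ℕ → Tm) : ℕ → Tm
  | 0 => var 0
  | v + 1 => lift 0 (σ v)

def inst (σ : ℕ → Tm) : Tm → Tm
  | var v => σ v
  | app a b => app (inst σ a) (inst σ b)
  | lam a => lam (inst (up σ) a)

theorem up_var : up var = var := by
  funext v; cases v <;> simp [up, lift]

theorem inst_var (t : Tm) : inst var t = t := by
  induction t with
  | var v => rfl
  | app a b iha ihb => simp only [inst, iha, ihb]
  | lam a ih => simp only [inst, up_var, ih]

theorem lift_inst (c : ℕ) (σ : ℕ → Tm) (t : Tm) :
    lift c (inst σ t) = inst (fun v => lift c (σ v)) t := by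
  induction t generalizing c σ with
  | var v => rfl
  | app a b iha ihb => simp only [lift, inst, iha, ihb]
  | lam a ih =>
    have hup : (fun v => lift (c + 1) (up σ v)) = up (fun v => lift c (σ v)) := by
      funext v; cases v <;> simp [up, lift, lift_lift_comm _ (Nat.zero_le c)]
    simp only [lift, inst, ih, hup]

theorem inst_lift (c : ℕ) (σ : ℕ → Tm) (t : Tm) :
    inst σ (lift c t) = inst (fun v => σ (if v < c then v else v + 1)) t := by
  induction t generalizing c σ with
  | var v => by_cases h : v < c <;> simp [lift, inst, h]
  | app a b iha ihb => simp only [lift, inst, iha, ihb]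
  | lam a ih =>
    have hup : (fun v => up σ (if v < c + 1 then v else v + 1))
        = up (fun v => σ (if v < c then v else v + 1)) := by
      funext v; cases v with
      | zero => simp [up]
      | succ v => by_cases h : v < c <;> simp [up, h]
    simp only [lift, inst, ih, hup]

theorem inst_inst (σ τ : ℕ → Tm) (t : Tm) :
    inst σ (inst τ t) = inst (fun v => inst σ (τ v)) t := by
  induction t generalizing σ τ with
  | var v => rfl
  | app a b iha ihb => simp only [inst, iha, ihb]
  | lam a ih =>
    have hup : (fun v => inst (up σ) (up τ v)) = up (fun v => inst σ (τ v)) := by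
      funext v; cases v <;> simp [up, inst, inst_lift, lift_inst]
    simp only [inst, ih, hup]

theorem subst_eq_inst (k : ℕ) (s t : Tm) : subst k s t = inst (fun v => subst k s (var v)) t := by
  induction t generalizing k s with
  | var v => rfl
  | app a b iha ihb => rw [subst.eq_2, inst.eq_2, iha, ihb]
  | lam a ih =>
    have hup : (fun v => subst (k + 1) (lift 0 s) (var v)) = up (fun v => subst k s (var v)) := by
      funext v; cases v with
      | zero => simp [up, subst]
      | succ v =>
        by_cases h₁ : v = k <;> by_cases h₂ : k < v <;> simp [up, subst, lift, *]
        omega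
    rw [subst.eq_3, inst.eq_3, ih, hup]

theorem liftN_eq_inst (m : ℕ) (t : Tm) : liftN m t = inst (fun v => var (v + m)) t := by
  induction m generalizing t with
  | zero => exact (inst_var t).symm
  | succ m ih =>
    rw [liftN, Function.iterate_succ_apply, ← liftN, ih, inst_lift]
    simp [Nat.add_right_comm, Nat.add_assoc]

theorem inst_liftN (σ : ℕ → Tm) (m : ℕ) (t : Tm) :
    inst σ (liftN m t) = inst (fun v => σ (v + m)) t := by
  rw [liftN_eq_inst, inst_inst]; rfl

theorem up_iterate_of_lt (σ : ℕ → Tm) {m v : ℕ} (h : v < m) : up^[m] σ v = var v := by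
  induction m generalizing v with
  | zero => omega
  | succ m ih =>
    rw [Function.iterate_succ_apply']
    cases v with
    | zero => rfl
    | succ v => simp [up, ih (Nat.lt_of_succ_lt_succ h), lift]

theorem up_iterate_add (σ : ℕ → Tm) (m v : ℕ) : up^[m] σ (v + m) = liftN m (σ v) := by
  induction m with
  | zero => rfl
  | succ m ih =>
    rw [Function.iterate_succ_apply', ← Nat.add_assoc, up, ih, liftN, liftN,
      Function.iterate_succ_apply']

theorem inst_lamN (σ : ℕ → Tm) (m : ℕ) (t : Tm) :
    inst σ (lamN m t) = lamN m (inst (up^[m] σ) t) := by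
  induction m generalizing σ with
  | zero => rfl
  | succ m ih => simp only [lamN, inst, ih, Function.iterate_succ_apply]

theorem lamN_add (a b : ℕ) (t : Tm) : lamN (a + b) t = lamN a (lamN b t) := by
  induction a with
  | zero => simp [lamN]
  | succ a ih => rw [Nat.add_right_comm, lamN, ih, lamN]

theorem foldl_app_eq_appList {α : Type*} (g : α → Tm) (l : List α) (t : Tm) :
    l.foldl (fun s i => app s (g i)) t = appList t (l.map g) := by
  rw [appList, List.foldl_map]

theorem inst_appList (σ : ℕ → Tm) (t : Tm) (l : List Tm) :
    inst σ (appList t l) = appList (inst σ t) (l.map (inst σ)) := by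
  induction l generalizing t with
  | nil => rfl
  | cons a l ih => exact ih (app t a)

theorem appVars_eq_appList (t : Tm) (a k : ℕ) :
    appVars t a k = appList t ((List.range k).reverse.map fun i => var (a + i)) :=
  foldl_app_eq_appList _ _ _

theorem inst_appVars {σ : ℕ → Tm} {a b k : ℕ} (h : ∀ i < k, σ (a + i) = var (b + i)) (t : Tm) :
    inst σ (appVars t a k) = appVars (inst σ t) b k := by
  rw [appVars_eq_appList, appVars_eq_appList, inst_appList, List.map_map]
  congr 1
  refine List.map_congr_left fun i hi => h i ?_
  simpa using hi

def ClosedBelow : ℕ → Tm → Prop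
  | c, var v => v < c
  | c, app a b => ClosedBelow c a ∧ ClosedBelow c b
  | c, lam a => ClosedBelow (c + 1) a

theorem closedBelow_lamN {c m : ℕ} {t : Tm} (h : ClosedBelow (c + m) t) :
    ClosedBelow c (lamN m t) := by
  induction m generalizing c with
  | zero => exact h
  | succ m ih => exact ih (by rwa [Nat.add_right_comm])

theorem closedBelow_appList {c : ℕ} {t : Tm} {l : List Tm} (ht : ClosedBelow c t)
    (hl : ∀ a ∈ l, ClosedBelow c a) : ClosedBelow c (appList t l) := by
  induction l generalizing t with
  | nil => exact ht
  | cons a l ih => exact ih ⟨ht, hl a (by simp)⟩ fun b hb => hl b (by simp [hb])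

theorem closedBelow_appVars {c a k : ℕ} {t : Tm} (ht : ClosedBelow c t) (h : a + k ≤ c) :
    ClosedBelow c (appVars t a k) := by
  rw [appVars_eq_appList]
  refine closedBelow_appList ht fun x hx => ?_
  simp only [List.mem_map, List.mem_reverse, List.mem_range] at hx
  obtain ⟨i, hi, rfl⟩ := hx
  show a + i < c
  omega

theorem inst_eq_self_of_closedBelow {σ : ℕ → Tm} {c : ℕ} {t : Tm} (ht : ClosedBelow c t)
    (hσ : ∀ v < c, σ v = var v) : inst σ t = t := by
  induction t generalizing σ c with
  | var v => exact hσ v ht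
  | app a b iha ihb => simp only [inst, iha ht.1 hσ, ihb ht.2 hσ]
  | lam a ih =>
    refine congrArg lam (ih ht fun v hv => ?_)
    cases v with
    | zero => rfl
    | succ v => simp [up, hσ v (by omega), lift]

theorem liftN_eq_self_of_closedBelow_zero {t : Tm} (ht : ClosedBelow 0 t) (m : ℕ) :
    liftN m t = t := by
  rw [liftN_eq_inst, inst_eq_self_of_closedBelow ht (by simp)]

/-- The substitution performed by applying `lamN bs.length t` to `bs`: the innermost binder,
de Bruijn index `0`, receives the last argument. -/
def listSub (bs : List Tm) (v : ℕ) : Tm := bs.reverse.getD v (var (v - bs.length))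

theorem listSub_of_lt {bs : List Tm} {v : ℕ} (h : v < bs.length) :
    listSub bs v = bs.reverse[v]'(by simpa using h) :=
  List.getD_eq_getElem _ _ _

theorem inst_listSub_liftN (bs : List Tm) (t : Tm) : inst (listSub bs) (liftN bs.length t) = t := by
  rw [inst_liftN]
  convert inst_var t using 2 with v
  simp [listSub]

namespace Reduces

theorem app {a a' b b' : Tm} (ha : Reduces a a') (hb : Reduces b b') :
    Reduces (Tm.app a b) (Tm.app a' b') :=
  (ha.lift (Tm.app · b) fun _ _ => Step.appL b).trans (hb.lift (Tm.app a') fun _ _ => Step.appR a')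

theorem lamN (m : ℕ) {t t' : Tm} (h : Reduces t t') : Reduces (Tm.lamN m t) (Tm.lamN m t') := by
  induction m with
  | zero => exact h
  | succ m ih => exact ih.lift lam fun _ _ => Step.lamCongr

theorem appList {l l' : List Tm} (hl : List.Forall₂ Reduces l l') {t t' : Tm} (h : Reduces t t') :
    Reduces (Tm.appList t l) (Tm.appList t' l') := by
  induction hl generalizing t t' with
  | nil => exact h
  | cons hx _ ih => exact ih (h.app hx)

end Reduces

theorem reduces_appList_lamN (bs : List Tm) (t : Tm) :
    Reduces (appList (lamN bs.length t) bs) (inst (listSub bs) t) := by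
  induction bs generalizing t with
  | nil =>
    have hid : listSub [] = var := by funext v; simp [listSub]
    rw [hid, inst_var]
    exact Relation.ReflTransGen.refl
  | cons b bs ih =>
    have hβ : Reduces (appList (lamN (bs.length + 1) t) (b :: bs))
        (appList (lamN bs.length (inst (up^[bs.length] fun v => subst 0 b (var v)) t)) bs) := by
      rw [← inst_lamN, ← subst_eq_inst]
      exact Reduces.appList (List.forall₂_same.2 fun _ _ => Relation.ReflTransGen.refl)
        (Relation.ReflTransGen.single (Step.beta _ b))
    have hσ : (fun v => inst (listSub bs) (up^[bs.length] (fun v => subst 0 b (var v)) v))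
        = listSub (b :: bs) := by
      funext v
      rcases Nat.lt_or_ge v bs.length with hv | hv
      · have hv' : v < bs.reverse.length := by simpa using hv
        rw [up_iterate_of_lt _ hv, inst, listSub, listSub, List.length_cons, List.reverse_cons,
          List.getD_append _ _ _ _ hv', List.getD_eq_getElem (hn := hv'),
          List.getD_eq_getElem (hn := hv')]
      · obtain ⟨w, rfl⟩ := Nat.exists_eq_add_of_le' hv
        rw [up_iterate_add, inst_listSub_liftN]
        cases w <;> simp [subst, listSub]
        omega
    have h := ih (inst (up^[bs.length] fun v => subst 0 b (var v)) t)
    rw [inst_inst, hσ] at h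
    exact hβ.trans h

/-- The arguments `(x_1 x_1 ⋯ x_n) ⋯ (x_n x_1 ⋯ x_n)` under the binders `λx_1…x_n`. -/
def selfApps (n : ℕ) : List Tm := (List.range n).reverse.map fun i => appVars (var i) 0 n

theorem length_selfApps (n : ℕ) : (selfApps n).length = n := by simp [selfApps]

theorem listSub_selfApps {n i : ℕ} (hi : i < n) : listSub (selfApps n) i = appVars (var i) 0 n := by
  rw [listSub_of_lt (by rwa [length_selfApps])]
  simp [selfApps]

theorem inst_selfApps {σ : ℕ → Tm} {n : ℕ} (hσ : ∀ v < n, σ v = var v) :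
    (selfApps n).map (inst σ) = selfApps n := by
  refine (List.map_congr_left fun a ha => ?_).trans (List.map_id _)
  simp only [selfApps, List.mem_map, List.mem_reverse, List.mem_range] at ha
  obtain ⟨i, hi, rfl⟩ := ha
  exact inst_eq_self_of_closedBelow (closedBelow_appVars hi (Nat.zero_add n).le) hσ

theorem W_eq (n j : ℕ) : W n j = lamN n (appList (var (2 * n - j)) (selfApps n)) :=
  congrArg (lamN n) (foldl_app_eq_appList _ _ _)

theorem M_eq (n j : ℕ) : M n j = lamN n (lamN n (appList (var (n - j))
    ((List.range n).reverse.map fun i => appVars (var (n + i)) 0 n))) := by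
  rw [M, two_mul, lamN_add, foldl_app_eq_appList]

theorem V_eq (n j : ℕ) : V n j = lamN n (lamN n (appList (var (n - j))
    ((List.range n).reverse.map fun i => appVars (appVars (var (n + i)) n n) 0 n))) := by
  rw [V, two_mul, lamN_add, foldl_app_eq_appList]

theorem closedBelow_M {n : ℕ} (hn : 0 < n) (j : ℕ) : ClosedBelow 0 (M n j) := by
  rw [M_eq, ← lamN_add]
  refine closedBelow_lamN (closedBelow_appList (by show n - j < 0 + (n + n); omega) fun a ha => ?_)
  simp only [List.mem_map, List.mem_reverse, List.mem_range] at ha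
  obtain ⟨i, hi, rfl⟩ := ha
  exact closedBelow_appVars (by show n + i < 0 + (n + n); omega) (by omega)

theorem inst_listSub_M_W {n j : ℕ} (hj : 1 ≤ j) (hjn : j ≤ n) :
    inst (listSub ((List.range n).map fun i => M n (i + 1))) (W n j)
      = lamN n (appList (M n j) (selfApps n)) := by
  rw [W_eq, inst_lamN, inst_appList, inst_selfApps fun v hv => up_iterate_of_lt _ hv,
    show 2 * n - j = (n - j) + n by omega, inst, up_iterate_add,
    listSub_of_lt (by simp; omega)]
  simp only [List.getElem_reverse, List.getElem_map, List.getElem_range, List.length_map,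
    List.length_range, show n - 1 - (n - j) + 1 = j by omega]
  rw [liftN_eq_self_of_closedBelow_zero (closedBelow_M (by omega) _)]

theorem reduces_lamN_M_selfApps {n j : ℕ} (hj : 1 ≤ j) (hjn : j ≤ n) :
    Reduces (lamN n (appList (M n j) (selfApps n))) (V n j) := by
  have hargs : ((List.range n).reverse.map fun i => appVars (var (n + i)) 0 n).map
      (inst (up^[n] (listSub (selfApps n))))
      = (List.range n).reverse.map fun i => appVars (appVars (var (n + i)) n n) 0 n := by
    rw [List.map_map]
    refine List.map_congr_left fun i hi => ?_
    have hi : i < n := by simpa using hi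
    rw [Function.comp_apply, inst_appVars fun l hl => up_iterate_of_lt _ (by omega), inst,
      Nat.add_comm n i, up_iterate_add, listSub_selfApps hi, liftN_eq_inst,
      inst_appVars (b := n) fun l _ => by rw [Nat.zero_add, Nat.add_comm], inst]
  have h := reduces_appList_lamN (selfApps n) (lamN n (appList (var (n - j))
    ((List.range n).reverse.map fun i => appVars (var (n + i)) 0 n)))
  rw [length_selfApps, inst_lamN, inst_appList, hargs, inst,
    up_iterate_of_lt _ (by omega : n - j < n)] at h
  rw [M_eq, V_eq]
  exact Reduces.lamN n h

theorem boehm_relation_general (n k : ℕ) (hk : 1 ≤ k) (hkn : k ≤ n) :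
    Reduces (appList (Phi n k) ((List.range n).map fun i => M n (i + 1)))
      (Psi n k) := by
  rw [Phi, Psi]
  have hW : ∀ j, 1 ≤ j → j ≤ n →
      Reduces (inst (listSub ((List.range n).map fun i => M n (i + 1))) (W n j)) (V n j) :=
    fun j hj hjn => by
      rw [inst_listSub_M_W hj hjn]
      exact reduces_lamN_M_selfApps hj hjn
  have hΦ := reduces_appList_lamN ((List.range n).map fun i => M n (i + 1))
    (appList (W n k) ((List.range n).map fun i => W n (i + 1)))
  rw [List.length_map, List.length_range, inst_appList, List.map_map] at hΦ
  refine hΦ.trans (Reduces.appList ?_ (hW k hk hkn))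
  rw [List.forall₂_map_left_iff, List.forall₂_map_right_iff, List.forall₂_same]
  intro i hi
  exact hW (i + 1) (Nat.le_add_left 1 i) (List.mem_range.1 hi)

/-- Böhm's relation, n-ary: for n ≥ 1, 1 ≤ k ≤ n,
(Φ_k^n M_1^n ⋯ M_n^n) ↠ Ψ_k^n  (reflexive-transitive closure of βη-reduction). -/
theorem boehm_relation (n k : ℕ) (hn : 1 ≤ n) (hk : 1 ≤ k) (hkn : k ≤ n) :
    Reduces (appList (Phi n k) ((List.range n).map fun i => M n (i + 1)))
      (Psi n k) :=
  boehm_relation_general n k hk hkn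

end Tm
end LC
end
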